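/- Let G be a connected finite simple graph, k a positive integer, and S ⊆ V(G) a set that is (2k,k)-unbreakable in G. Let 𝒞 be the family of all inclusion-wise maximal chips and let A = (⋂_{C ∈ 𝒞} (V(G) ∖ N_G[C])) ∪ ⋃_{C ∈ 𝒞} N_G(C), with A = V(G) when 𝒞 = ∅. Then A is (τ,k)-unbreakable in G, where τ = (3k)²·8^{3k} + 2k. -/

import Mathlib

open SimpleGraph

variable {V : Type*}

/-- The open neighbourhood `N_G(C)` of a vertex set `C`:
vertices outside `C` with a neighbour in `C`. -/
def setNbhd (G : SimpleGraph V) (C : Set V) : Set V :=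
  {v | v ∉ C ∧ ∃ u ∈ C, G.Adj u v}

/-- The closed neighbourhood `N_G[C] = C ∪ N_G(C)`. -/
def closedNbhd (G : SimpleGraph V) (C : Set V) : Set V :=
  C ∪ setNbhd G C

/-- `W` is `(q,k)`-unbreakable in the induced subgraph `G[U]`:
every separation `(A,B)` of `G[U]` of order at most `k` has
`|(A∖B) ∩ W| ≤ q` or `|(B∖A) ∩ W| ≤ q`. -/
def UnbreakableIn (G : SimpleGraph V) (U W : Set V) (q k : ℕ) : Prop :=
  ∀ A B : Set V, A ∪ B = U →
    (∀ a ∈ A \ B, ∀ b ∈ B \ A, ¬ G.Adj a b) →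
    (A ∩ B).ncard ≤ k →
    ((A \ B) ∩ W).ncard ≤ q ∨ ((B \ A) ∩ W).ncard ≤ q

/-- `W` is `(q,k)`-unbreakable in `G`. -/
def Unbreakable (G : SimpleGraph V) (W : Set V) (q k : ℕ) : Prop :=
  UnbreakableIn G Set.univ W q k

/-- `x` and `y` lie in the same connected component of `G − W`. -/
def ReachAvoid (G : SimpleGraph V) (W : Set V) (x y : V) : Prop :=
  ∃ (hx : x ∈ Wᶜ) (hy : y ∈ Wᶜ), (G.induce Wᶜ).Reachable ⟨x, hx⟩ ⟨y, hy⟩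

/-- `W` is an `X–Y` separator: no connected component of `G − W` contains
a vertex of `X∖W` and a vertex of `Y∖W`. -/
def IsSeparator (G : SimpleGraph V) (X Y W : Set V) : Prop :=
  ∀ x ∈ X \ W, ∀ y ∈ Y \ W, ¬ ReachAvoid G W x y

/-- `R_{G−W}(X∖W)`: the set of vertices reachable from `X∖W` in `G − W`. -/
def reachSet (G : SimpleGraph V) (W X : Set V) : Set V :=
  {y | ∃ x ∈ X \ W, ReachAvoid G W x y}

/-- `W` is an important `X–Y` separator. -/
def IsImportantSeparator (G : SimpleGraph V) (X Y W : Set V) : Prop :=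
  IsSeparator G X Y W ∧
  (∀ W' ⊆ W, IsSeparator G X Y W' → W' = W) ∧
  ∀ W' : Set V, IsSeparator G X Y W' → W'.ncard ≤ W.ncard →
    ¬ reachSet G W X ⊂ reachSet G W' X

/-- A chip (w.r.t. `G`, `k` and `S`): `G[C]` is connected, `|N_G(C)| ≤ 3k`,
and `N_G(C)` is an important `C–S` separator. -/
def IsChip (G : SimpleGraph V) (k : ℕ) (S C : Set V) : Prop :=
  (G.induce C).Connected ∧ (setNbhd G C).ncard ≤ 3 * k ∧
  IsImportantSeparator G C S (setNbhd G C)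

/-- The family of all inclusion-wise maximal chips. -/
def maximalChips (G : SimpleGraph V) (k : ℕ) (S : Set V) : Set (Set V) :=
  {C | IsChip G k S C ∧ ∀ C', IsChip G k S C' → C ⊆ C' → C' = C}

/-- Two vertex sets touch: they intersect or some edge joins them. -/
def Touches (G : SimpleGraph V) (C₁ C₂ : Set V) : Prop :=
  (C₁ ∩ C₂).Nonempty ∨ ∃ u ∈ C₁, ∃ v ∈ C₂, G.Adj u v

/-- `D` is a connected component of `G − A`: a maximal set disjoint from `A`
inducing a connected subgraph. -/
def IsCompOf (G : SimpleGraph V) (A D : Set V) : Prop :=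
  D ⊆ Aᶜ ∧ (G.induce D).Connected ∧
  ∀ D', D ⊆ D' → D' ⊆ Aᶜ → (G.induce D').Connected → D' = D

/-- The set `A = (⋂_{C ∈ 𝒞} V(G) ∖ N[C]) ∪ ⋃_{C ∈ 𝒞} N(C)` built from the
maximal chips (equals `V(G)` when there are no chips). -/
def chipBag (G : SimpleGraph V) (k : ℕ) (S : Set V) : Set V :=
  (⋂ C ∈ maximalChips G k S, (closedNbhd G C)ᶜ) ∪
    ⋃ C ∈ maximalChips G k S, setNbhd G C

/-- `η(k) = 3k·(3k·4^{3k}+1)`. -/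
def etaB (k : ℕ) : ℕ := 3 * k * (3 * k * 4 ^ (3 * k) + 1)

/-- `τ(k) = (3k)²·8^{3k} + 2k`. -/
def tauB (k : ℕ) : ℕ := (3 * k) ^ 2 * 8 ^ (3 * k) + 2 * k

/-- `τ′(k) = τ + (C(τ+k,2)·k + k)·k·η`. -/
def tauB' (k : ℕ) : ℕ :=
  tauB k + ((tauB k + k).choose 2 * k + k) * k * etaB k

/-- The tree graph determined by a parent function. -/
def parentGraph {T : Type*} (parent : T → T) : SimpleGraph T where
  Adj t s := t ≠ s ∧ (parent t = s ∨ parent s = t)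
  symm := by constructor; intro t s h; exact ⟨h.1.symm, h.2.symm⟩
  loopless := by constructor; intro t h; exact h.1 rfl

/-- The descendants of `t` (including `t` itself). -/
def descSet {T : Type*} (parent : T → T) (t : T) : Set T :=
  {u | ∃ n : ℕ, parent^[n] u = t}

/-- `γ(t) = ⋃_{u ⪯ t} β(u)`. -/
def gammaSet {T : Type*} (parent : T → T) (β : T → Set V) (t : T) : Set V :=
  ⋃ u ∈ descSet parent t, β u

/-- `σ(t) = ∅` for the root, `β(t) ∩ β(parent t)` otherwise. -/
def sigmaSet {T : Type*} [DecidableEq T] (root : T) (parent : T → T)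
    (β : T → Set V) (t : T) : Set V :=
  if t = root then ∅ else β t ∩ β (parent t)

/-- `(T,β)` (a rooted tree given by `root` and `parent`, with bags `β`)
is a tree decomposition of `G`. -/
structure IsTreeDecomp (G : SimpleGraph V) {T : Type*} (root : T) (parent : T → T)
    (β : T → Set V) : Prop where
  parent_root : parent root = root
  reaches_root : ∀ t : T, ∃ n : ℕ, parent^[n] t = root
  bags_connected : ∀ v : V, ((parentGraph parent).induce {t | v ∈ β t}).Connected
  edge_in_bag : ∀ u v : V, G.Adj u v → ∃ t : T, u ∈ β t ∧ v ∈ β t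

/-!
Fix a separation of order at most `k`; as `S` is `(2k,k)`-unbreakable, one side `Y` (separator
`Z` removed) has `|Y ∩ S| ≤ 2k`, and `N(Y) ⊆ Z`. Every component of `G[Y ∖ S]` has its
neighbours in `Z ∪ (Y ∩ S)`, so at most `3k` of them, and therefore lies in a maximal chip.
Hence a vertex of `Y ∖ S` in the bag is a neighbour of a maximal chip that meets `Z`. A maximal
chip through a vertex `t` is determined by its neighbourhood, an important `{t}`–`S` separator
of size at most `3k`, and there are at most `4^{3k}` of these (branch on a vertex of the
furthest minimum separator). So the bag has at most `2k + k · 4^{3k} · 3k ≤ τ` vertices in `Y`.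
-/

namespace SimpleGraph

variable {G : SimpleGraph V}

lemma reachable_induce_iff {s : Set V} {x y : s} :
    (G.induce s).Reachable x y ↔ ∃ p : G.Walk x y, ∀ v ∈ p.support, v ∈ s := by
  constructor
  · rintro ⟨p⟩
    have hsupp : ∀ v ∈ (p.map (Embedding.induce s).toHom).support, v ∈ s := by
      simp only [Walk.support_map, List.mem_map]
      rintro _ ⟨v, -, rfl⟩
      exact v.2
    exact ⟨_, hsupp⟩
  · rintro ⟨p, hp⟩
    exact ⟨p.induce s hp⟩

end SimpleGraph

section Reach

variable {G : SimpleGraph V} {W W' X X' Y S : Set V} {x y z : V}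

lemma reachAvoid_iff_walk :
    ReachAvoid G W x y ↔ ∃ p : G.Walk x y, ∀ v ∈ p.support, v ∉ W := by
  constructor
  · rintro ⟨hx, hy, h⟩
    exact reachable_induce_iff.1 h
  · rintro ⟨p, hp⟩
    exact ⟨hp x p.start_mem_support, hp y p.end_mem_support, reachable_induce_iff.2 ⟨p, hp⟩⟩

lemma ReachAvoid.refl (h : x ∉ W) : ReachAvoid G W x x := ⟨h, h, .refl _⟩

lemma ReachAvoid.notMem_right (h : ReachAvoid G W x y) : y ∉ W := h.2.1

lemma ReachAvoid.trans (h : ReachAvoid G W x y) (h' : ReachAvoid G W y z) :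
    ReachAvoid G W x z :=
  ⟨h.1, h'.2.1, h.2.2.trans h'.2.2⟩

lemma ReachAvoid.of_walk (p : G.Walk x y) (hp : ∀ v ∈ p.support, v ∉ W) :
    ReachAvoid G W x y :=
  reachAvoid_iff_walk.2 ⟨p, hp⟩

lemma ReachAvoid.mono (hW : W' ⊆ W) (h : ReachAvoid G W x y) : ReachAvoid G W' x y := by
  obtain ⟨p, hp⟩ := reachAvoid_iff_walk.1 h
  exact .of_walk p fun v hv hvW' => hp v hv (hW hvW')

lemma ReachAvoid.adj (h : ReachAvoid G W x y) (hyz : G.Adj y z) (hz : z ∉ W) :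
    ReachAvoid G W x z :=
  h.trans ⟨h.notMem_right, hz,
    (show (G.induce Wᶜ).Adj ⟨y, h.notMem_right⟩ ⟨z, hz⟩ from hyz).reachable⟩

lemma notMem_of_mem_reachSet (h : y ∈ reachSet G W X) : y ∉ W := by
  obtain ⟨_, _, hr⟩ := h
  exact hr.notMem_right

lemma mem_reachSet_of_mem (hx : x ∈ X) (hxW : x ∉ W) : x ∈ reachSet G W X :=
  ⟨x, ⟨hx, hxW⟩, .refl hxW⟩

lemma subset_reachSet (hd : Disjoint X W) : X ⊆ reachSet G W X :=
  fun _ hx => mem_reachSet_of_mem hx (hd.notMem_of_mem_left hx)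

lemma reachSet_adj (h : y ∈ reachSet G W X) (hyz : G.Adj y z) (hz : z ∉ W) :
    z ∈ reachSet G W X := by
  obtain ⟨x, hx, hr⟩ := h
  exact ⟨x, hx, hr.adj hyz hz⟩

lemma reachSet_mono (hX : X ⊆ X') : reachSet G W X ⊆ reachSet G W X' := by
  rintro y ⟨x, hx, hr⟩
  exact ⟨x, ⟨hX hx.1, hx.2⟩, hr⟩

lemma reachSet_anti (hW : W' ⊆ W) : reachSet G W X ⊆ reachSet G W' X := by
  rintro y ⟨x, hx, hr⟩
  exact ⟨x, ⟨hx.1, fun h => hx.2 (hW h)⟩, hr.mono hW⟩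

lemma reachSet_subset_of_subset_reachSet (hX : X' ⊆ reachSet G W X) :
    reachSet G W X' ⊆ reachSet G W X := by
  rintro y ⟨x', hx', hr⟩
  obtain ⟨x, hx, hr'⟩ := hX hx'.1
  exact ⟨x, hx, hr'.trans hr⟩

lemma reachSet_subset_of_closed (hY : ∀ u ∈ Y, ∀ z, G.Adj u z → z ∉ W → z ∈ Y)
    (hX : X \ W ⊆ Y) : reachSet G W X ⊆ Y := by
  have walk_stays : ∀ {u y} (p : G.Walk u y), u ∈ Y → (∀ v ∈ p.support, v ∉ W) → y ∈ Y := by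
    intro u y p
    induction p with
    | nil => exact fun hu _ => hu
    | cons hab p ih =>
      intro hu hp
      simp only [Walk.support_cons, List.mem_cons, forall_eq_or_imp] at hp
      exact ih (hY _ hu _ hab (hp.2 _ p.start_mem_support)) hp.2
  rintro y ⟨x, hx, hr⟩
  obtain ⟨p, hp⟩ := reachAvoid_iff_walk.1 hr
  exact walk_stays p (hX hx) hp

lemma exists_walk_of_mem_reachSet (hy : y ∈ reachSet G W X) :
    ∃ x ∈ X \ W, ∃ p : G.Walk x y, ∀ v ∈ p.support, v ∈ reachSet G W X := by
  classical
  obtain ⟨x, hx, hr⟩ := hy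
  obtain ⟨p, hp⟩ := reachAvoid_iff_walk.1 hr
  refine ⟨x, hx, p, fun v hv => ⟨x, hx, .of_walk (p.takeUntil v hv) fun u hu => ?_⟩⟩
  exact hp u (p.support_takeUntil_subset_support hv hu)

lemma reachSet_reachSet_subset (hd : Disjoint (reachSet G W X) W') :
    reachSet G W' (reachSet G W X) ⊆ reachSet G W' X := by
  rintro y ⟨r, hr, hry⟩
  obtain ⟨x, hx, p, hp⟩ := exists_walk_of_mem_reachSet hr.1
  exact ⟨x, ⟨hx.1, hd.notMem_of_mem_left (hp x p.start_mem_support)⟩,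
    (ReachAvoid.of_walk p fun v hv => hd.notMem_of_mem_left (hp v hv)).trans hry⟩

lemma reachSet_subset_reachSet_of_disjoint (hd : Disjoint (reachSet G W X) W') :
    reachSet G W X ⊆ reachSet G W' X :=
  (subset_reachSet hd).trans (reachSet_reachSet_subset hd)

lemma subset_reachSet_of_preconnected {C : Set V} (hC : (G.induce C).Preconnected)
    (hx : x ∈ C) (hd : Disjoint C W) : C ⊆ reachSet G W {x} := by
  intro y hy
  have hCW : C ⊆ Wᶜ := hd.subset_compl_right
  exact ⟨x, ⟨rfl, hCW hx⟩, hCW hx, hCW hy,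
    (hC ⟨x, hx⟩ ⟨y, hy⟩).map (G.induceHomOfLE hCW).toHom⟩

lemma connected_induce_reachSet (hX : (G.induce X).Connected) (hd : Disjoint X W) :
    (G.induce (reachSet G W X)).Connected := by
  obtain ⟨⟨x₀, hx₀⟩⟩ := hX.nonempty
  have hXR : X ⊆ reachSet G W X := subset_reachSet hd
  rw [connected_iff_exists_forall_reachable]
  refine ⟨⟨x₀, hXR hx₀⟩, fun ⟨y, hy⟩ => ?_⟩
  obtain ⟨x, hx, p, hp⟩ := exists_walk_of_mem_reachSet hy
  exact ((hX.preconnected ⟨x₀, hx₀⟩ ⟨x, hx.1⟩).map (G.induceHomOfLE hXR).toHom).trans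
    (reachable_induce_iff.2 ⟨p, hp⟩)

lemma setNbhd_reachSet_subset : setNbhd G (reachSet G W X) ⊆ W := by
  rintro v ⟨hv, u, hu, huv⟩
  by_contra hvW
  exact hv (reachSet_adj hu huv hvW)

lemma reachSet_subset_of_setNbhd_subset (hYZ : setNbhd G Y ⊆ W) (hX : X \ W ⊆ Y) :
    reachSet G W X ⊆ Y :=
  reachSet_subset_of_closed
    (fun u hu _ huz hz => by_contra fun hzY => hz (hYZ ⟨hzY, u, hu, huz⟩)) hX

lemma reachSet_setNbhd_union (hd : Disjoint X W) :
    reachSet G (setNbhd G (reachSet G W X ∪ reachSet G W' X)) X =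
      reachSet G W X ∪ reachSet G W' X := by
  have hXR : X ⊆ reachSet G W X := subset_reachSet hd
  refine (reachSet_subset_of_setNbhd_subset subset_rfl fun x hx => .inl (hXR hx.1)).antisymm
    (Set.union_subset ?_ ?_) <;>
  · refine reachSet_subset_reachSet_of_disjoint (Set.disjoint_left.2 fun v hv hN => hN.1 ?_)
    simp [hv]

lemma reachSet_setNbhd_reachSet (hd : Disjoint X W) :
    reachSet G (setNbhd G (reachSet G W X)) X = reachSet G W X := by
  simpa using reachSet_setNbhd_union (G := G) (W' := W) hd

lemma isSeparator_iff_disjoint : IsSeparator G X S W ↔ Disjoint (reachSet G W X) S := by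
  rw [Set.disjoint_left]
  constructor
  · rintro h y ⟨x, hx, hr⟩ hy
    exact h x hx y ⟨hy, hr.notMem_right⟩ hr
  · rintro h x hx y hy hr
    exact h ⟨x, hx, hr⟩ hy.1

lemma IsSeparator.mono_source (h : IsSeparator G X' S W) (hX : X ⊆ X') :
    IsSeparator G X S W :=
  isSeparator_iff_disjoint.2 <| (isSeparator_iff_disjoint.1 h).mono_left (reachSet_mono hX)

lemma reachSet_eq_of_subset_reachSet (hX : X' ⊆ X) (hXR : X ⊆ reachSet G W X') :
    reachSet G W X = reachSet G W X' :=
  (reachSet_subset_of_subset_reachSet hXR).antisymm (reachSet_mono hX)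

lemma isImportantSeparator_congr_source (hX : X' ⊆ X) (hXR : X ⊆ reachSet G W X') :
    IsImportantSeparator G X S W ↔ IsImportantSeparator G X' S W := by
  have hR := reachSet_eq_of_subset_reachSet hX hXR
  constructor
  · rintro ⟨hsep, hmin, himp⟩
    refine ⟨hsep.mono_source hX, fun W'' hW'' hsep'' => hmin W'' hW'' ?_,
      fun W₂ hsep₂ hcard hss => ?_⟩
    · rw [isSeparator_iff_disjoint] at hsep'' ⊢
      rwa [reachSet_eq_of_subset_reachSet hX (hXR.trans (reachSet_anti hW''))]
    · have hR₂ := reachSet_eq_of_subset_reachSet hX (hXR.trans hss.subset)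
      refine himp W₂ ?_ hcard (by rwa [hR, hR₂])
      rwa [isSeparator_iff_disjoint, hR₂, ← isSeparator_iff_disjoint]
  · rintro ⟨hsep, hmin, himp⟩
    refine ⟨by rwa [isSeparator_iff_disjoint, hR, ← isSeparator_iff_disjoint],
      fun W'' hW'' hsep'' => hmin W'' hW'' (hsep''.mono_source hX),
      fun W₂ hsep₂ hcard hss => himp W₂ (hsep₂.mono_source hX) hcard ?_⟩
    have hd : Disjoint (reachSet G W X') W₂ :=
      Set.disjoint_left.2 fun _ hv => notMem_of_mem_reachSet (hss.subset (hR ▸ hv))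
    rwa [← hR, ← reachSet_eq_of_subset_reachSet hX
      (hXR.trans (reachSet_subset_reachSet_of_disjoint hd))]

lemma IsImportantSeparator.setNbhd_reachSet (h : IsImportantSeparator G X S W)
    (hd : Disjoint W X) : setNbhd G (reachSet G W X) = W := by
  refine h.2.1 _ setNbhd_reachSet_subset ?_
  rw [isSeparator_iff_disjoint, reachSet_setNbhd_reachSet hd.symm, ← isSeparator_iff_disjoint]
  exact h.1

end Reach

lemma ncard_setNbhd_union_add_ncard_setNbhd_inter_le [Finite V] (G : SimpleGraph V)
    (P Q : Set V) :
    (setNbhd G (P ∪ Q)).ncard + (setNbhd G (P ∩ Q)).ncard ≤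
      (setNbhd G P).ncard + (setNbhd G Q).ncard := by
  have hunion : setNbhd G (P ∪ Q) ∪ setNbhd G (P ∩ Q) ⊆ setNbhd G P ∪ setNbhd G Q := by
    rintro x (⟨hx, u, hu | hu, hux⟩ | ⟨hx, u, hu, hux⟩)
    · exact .inl ⟨fun h => hx (.inl h), u, hu, hux⟩
    · exact .inr ⟨fun h => hx (.inr h), u, hu, hux⟩
    · by_cases hxP : x ∈ P
      · exact .inr ⟨fun h => hx ⟨hxP, h⟩, u, hu.2, hux⟩
      · exact .inl ⟨hxP, u, hu.1, hux⟩
  have hinter : setNbhd G (P ∪ Q) ∩ setNbhd G (P ∩ Q) ⊆ setNbhd G P ∩ setNbhd G Q := by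
    rintro x ⟨⟨hx, -⟩, -, u, hu, hux⟩
    exact ⟨⟨fun h => hx (.inl h), u, hu.1, hux⟩, ⟨fun h => hx (.inr h), u, hu.2, hux⟩⟩
  rw [← Set.ncard_union_add_ncard_inter (setNbhd G (P ∪ Q)),
    ← Set.ncard_union_add_ncard_inter (setNbhd G P)]
  exact add_le_add (Set.ncard_le_ncard hunion) (Set.ncard_le_ncard hinter)

section DeleteVertex

variable {G : SimpleGraph V} {W X S : Set V} {v : V}

lemma reachSet_deleteIncidenceSet (hvX : v ∉ X) :
    reachSet (G.deleteIncidenceSet v) W X = reachSet G (insert v W) X := by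
  have hinsert :
      reachSet (G.deleteIncidenceSet v) (insert v W) X = reachSet G (insert v W) X := by
    have hv : v ∉ (insert v W)ᶜ := fun h => h (Set.mem_insert v W)
    simp only [reachSet, ReachAvoid, induce_deleteIncidenceSet_of_notMem G hv]
  rw [← hinsert]
  -- `v` is isolated in `G.deleteIncidenceSet v`, so walks from `X ∌ v` never meet it
  refine (reachSet_subset_of_closed (fun u hu z huz hz => ?_) fun x hx =>
    mem_reachSet_of_mem hx.1 ?_).antisymm (reachSet_anti (Set.subset_insert v W))
  · have hzv : z ≠ v := (deleteIncidenceSet_adj.1 huz).2.2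
    exact reachSet_adj hu huz (by simp [hzv, hz])
  · rintro (rfl | hxW)
    exacts [hvX hx.1, hx.2 hxW]

lemma isSeparator_deleteIncidenceSet_iff (hvX : v ∉ X) :
    IsSeparator (G.deleteIncidenceSet v) X S W ↔ IsSeparator G X S (insert v W) := by
  rw [isSeparator_iff_disjoint, isSeparator_iff_disjoint, reachSet_deleteIncidenceSet hvX]

lemma IsImportantSeparator.deleteIncidenceSet [Finite V] (h : IsImportantSeparator G X S W)
    (hvW : v ∈ W) (hvX : v ∉ X) :
    IsImportantSeparator (G.deleteIncidenceSet v) X S (W \ {v}) := by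
  have hW : insert v (W \ {v}) = W := by simp [hvW]
  refine ⟨(isSeparator_deleteIncidenceSet_iff hvX).2 (by rw [hW]; exact h.1),
    fun W'' hW'' hsep'' => ?_, fun W₂ hsep₂ hcard hss => ?_⟩
  · have hvW'' : v ∉ W'' := fun h => (hW'' h).2 rfl
    have hins : insert v W'' = W :=
      h.2.1 _ (Set.insert_subset hvW fun _ hu => (hW'' hu).1)
        ((isSeparator_deleteIncidenceSet_iff hvX).1 hsep'')
    rw [← hins, Set.insert_sdiff_of_mem _ (Set.mem_singleton v),
      Set.sdiff_singleton_eq_self hvW'']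
  · refine h.2.2 (insert v W₂) ((isSeparator_deleteIncidenceSet_iff hvX).1 hsep₂) ?_ ?_
    · have := Set.ncard_sdiff_singleton_add_one hvW
      have := Set.ncard_insert_le v W₂
      omega
    · rwa [reachSet_deleteIncidenceSet hvX, reachSet_deleteIncidenceSet hvX, hW] at hss

end DeleteVertex

section Counting

variable {G : SimpleGraph V} {W W' X S Δ R : Set V} {p : ℕ} {v : V}

def separators (G : SimpleGraph V) (X S : Set V) : Set (Set V) :=
  {W | IsSeparator G X S W ∧ Disjoint W X}

def importantSeparators (G : SimpleGraph V) (X S : Set V) (p : ℕ) : Set (Set V) :=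
  {W | IsImportantSeparator G X S W ∧ W.ncard ≤ p ∧ Disjoint W X}

lemma importantSeparators_subset_separators :
    importantSeparators G X S p ⊆ separators G X S :=
  fun _ hW => ⟨hW.1.1, hW.2.2⟩

lemma setNbhd_mem_separators (hXR : X ⊆ R) (hRS : Disjoint R S) :
    setNbhd G R ∈ separators G X S :=
  ⟨isSeparator_iff_disjoint.2 <| hRS.mono_left <|
      reachSet_subset_of_setNbhd_subset subset_rfl fun _ hx => hXR hx.1,
    Set.disjoint_left.2 fun _ hN hX => hN.1 (hXR hX)⟩

lemma subset_reachSet_of_mem_separators (hW : W ∈ separators G X S) : X ⊆ reachSet G W X :=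
  subset_reachSet hW.2.symm

lemma disjoint_reachSet_of_mem_separators (hW : W ∈ separators G X S) :
    Disjoint (reachSet G W X) S :=
  isSeparator_iff_disjoint.1 hW.1

lemma insert_mem_separators_of_deleteIncidenceSet (hvX : v ∉ X)
    (hW : W ∈ separators (G.deleteIncidenceSet v) X S) : insert v W ∈ separators G X S :=
  ⟨(isSeparator_deleteIncidenceSet_iff hvX).1 hW.1,
    Set.disjoint_insert_left.2 ⟨hvX, hW.2⟩⟩

/-- Submodularity of `|N(·)|`, as the boundary of the intersection is again a separator. -/
lemma ncard_setNbhd_union_reachSet_le [Finite V] (hW : W ∈ separators G X S)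
    (hW' : W' ∈ separators G X S)
    (hmin : ∀ W'' ∈ separators G X S, (setNbhd G (reachSet G W' X)).ncard ≤ W''.ncard) :
    (setNbhd G (reachSet G W X ∪ reachSet G W' X)).ncard ≤
      (setNbhd G (reachSet G W X)).ncard := by
  have hinter : setNbhd G (reachSet G W X ∩ reachSet G W' X) ∈ separators G X S :=
    setNbhd_mem_separators
      (Set.subset_inter (subset_reachSet_of_mem_separators hW)
        (subset_reachSet_of_mem_separators hW'))
      ((disjoint_reachSet_of_mem_separators hW).mono_left Set.inter_subset_left)
  have := ncard_setNbhd_union_add_ncard_setNbhd_inter_le G (reachSet G W X) (reachSet G W' X)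
  have := hmin _ hinter
  omega

lemma union_reachSet_mem_separators (hW : W ∈ separators G X S)
    (hW' : W' ∈ separators G X S) :
    setNbhd G (reachSet G W X ∪ reachSet G W' X) ∈ separators G X S :=
  setNbhd_mem_separators
    ((subset_reachSet_of_mem_separators hW).trans Set.subset_union_left)
    (Set.disjoint_union_left.2
      ⟨disjoint_reachSet_of_mem_separators hW, disjoint_reachSet_of_mem_separators hW'⟩)

structure IsFurthestMinSeparator (G : SimpleGraph V) (X S Δ : Set V) : Prop where
  mem : Δ ∈ separators G X S
  le_ncard : ∀ W ∈ separators G X S, Δ.ncard ≤ W.ncard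
  reachSet_subset :
    ∀ W ∈ separators G X S, W.ncard ≤ Δ.ncard → reachSet G W X ⊆ reachSet G Δ X

lemma IsFurthestMinSeparator.setNbhd_reachSet [Finite V] (h : IsFurthestMinSeparator G X S Δ) :
    setNbhd G (reachSet G Δ X) = Δ :=
  Set.eq_of_subset_of_ncard_le setNbhd_reachSet_subset
    (h.le_ncard _ (setNbhd_mem_separators (subset_reachSet_of_mem_separators h.mem)
      (disjoint_reachSet_of_mem_separators h.mem)))

lemma exists_isFurthestMinSeparator [Finite V] (hne : (separators G X S).Nonempty) :
    ∃ Δ, IsFurthestMinSeparator G X S Δ := by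
  obtain ⟨Wmin, hWmin, hmin⟩ :=
    Set.exists_min_image (separators G X S) Set.ncard (Set.toFinite _) hne
  obtain ⟨Wb, ⟨hWb, hWbcard⟩, hmax⟩ :=
    Set.exists_max_image {W ∈ separators G X S | W.ncard ≤ Wmin.ncard}
      (fun W => (reachSet G W X).ncard) (Set.toFinite _) ⟨Wmin, hWmin, le_rfl⟩
  set Δ := setNbhd G (reachSet G Wb X)
  have hΔR : reachSet G Δ X = reachSet G Wb X := reachSet_setNbhd_reachSet hWb.2.symm
  have hΔ : Δ ∈ separators G X S := setNbhd_mem_separators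
    (subset_reachSet_of_mem_separators hWb) (disjoint_reachSet_of_mem_separators hWb)
  have hΔcard : Δ.ncard ≤ Wmin.ncard :=
    (Set.ncard_le_ncard setNbhd_reachSet_subset).trans hWbcard
  have hΔmin : ∀ W ∈ separators G X S, Δ.ncard ≤ W.ncard := fun W hW => hΔcard.trans (hmin W hW)
  refine ⟨Δ, hΔ, hΔmin, fun W hW hWcard => ?_⟩
  have hunion := ncard_setNbhd_union_reachSet_le hW hΔ (by rwa [hΔR])
  rw [hΔR] at hunion ⊢
  have hle := hmax _ ⟨union_reachSet_mem_separators hW hWb,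
    hunion.trans ((Set.ncard_le_ncard setNbhd_reachSet_subset).trans (hWcard.trans hΔcard))⟩
  rw [reachSet_setNbhd_union hW.2.symm] at hle
  exact Set.subset_union_left.trans
    (Set.eq_of_subset_of_ncard_le Set.subset_union_right hle).symm.subset

lemma IsFurthestMinSeparator.reachSet_subset_of_isImportantSeparator [Finite V]
    (h : IsFurthestMinSeparator G X S Δ) (hW : IsImportantSeparator G X S W)
    (hWX : Disjoint W X) : reachSet G Δ X ⊆ reachSet G W X := by
  have hWsep : W ∈ separators G X S := ⟨hW.1, hWX⟩
  have hcard := ncard_setNbhd_union_reachSet_le hWsep h.mem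
    (by rw [h.setNbhd_reachSet]; exact h.le_ncard)
  rw [hW.setNbhd_reachSet hWX] at hcard
  have hnot := hW.2.2 _ (union_reachSet_mem_separators hWsep h.mem).1 hcard
  rw [reachSet_setNbhd_union hWX.symm] at hnot
  intro x hx
  by_contra hxW
  exact hnot (Set.ssubset_iff_subset_ne.2 ⟨Set.subset_union_left,
    fun heq => hxW (heq ▸ Set.mem_union_right _ hx)⟩)

lemma IsFurthestMinSeparator.ncard_lt [Finite V] (h : IsFurthestMinSeparator G X S Δ)
    (hv : v ∈ Δ) (hW : W ∈ separators G (insert v (reachSet G Δ X)) S) :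
    Δ.ncard < W.ncard := by
  set R := reachSet G W (insert v (reachSet G Δ X))
  have hXR : insert v (reachSet G Δ X) ⊆ R := subset_reachSet_of_mem_separators hW
  have hN : setNbhd G R ∈ separators G X S := setNbhd_mem_separators
    ((subset_reachSet_of_mem_separators h.mem).trans ((Set.subset_insert _ _).trans hXR))
    (disjoint_reachSet_of_mem_separators hW)
  by_contra! hle
  have hsub := h.reachSet_subset _ hN
    ((Set.ncard_le_ncard setNbhd_reachSet_subset).trans hle)
  rw [← h.setNbhd_reachSet] at hv
  obtain ⟨hvΔ, u, hu, huv⟩ := hv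
  have hRN : reachSet G Δ X ⊆ reachSet G (setNbhd G R) X :=
    reachSet_subset_reachSet_of_disjoint <| Set.disjoint_left.2 fun _ hy hN =>
      hN.1 (hXR (Set.mem_insert_of_mem _ hy))
  exact hvΔ (hsub (reachSet_adj (hRN hu) huv fun hN => hN.1 (hXR (Set.mem_insert _ _))))

lemma ncard_importantSeparators_mem_le [Finite V] (hvX : v ∉ X) :
    {W ∈ importantSeparators G X S p | v ∈ W}.ncard ≤
      (importantSeparators (G.deleteIncidenceSet v) X S (p - 1)).ncard := by
  refine Set.ncard_le_ncard_of_injOn (· \ {v}) (fun W ⟨hW, hvW⟩ =>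
    ⟨hW.1.deleteIncidenceSet hvW hvX, ?_, hW.2.2.mono_left Set.sdiff_subset⟩)
    (fun W₁ h₁ W₂ h₂ heq => ?_)
  · have := Set.ncard_sdiff_singleton_add_one hvW
    have := hW.2.1
    omega
  · simpa [h₁.2, h₂.2] using congrArg (insert v) heq

lemma IsFurthestMinSeparator.ncard_importantSeparators_notMem_le [Finite V]
    (h : IsFurthestMinSeparator G X S Δ) (hv : v ∈ Δ) :
    {W ∈ importantSeparators G X S p | v ∉ W}.ncard ≤
      (importantSeparators G (insert v (reachSet G Δ X)) S p).ncard := by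
  refine Set.ncard_le_ncard fun W ⟨hW, hvW⟩ => ?_
  have hΔW := h.reachSet_subset_of_isImportantSeparator hW.1 hW.2.2
  rw [← h.setNbhd_reachSet] at hv
  obtain ⟨-, u, hu, huv⟩ := hv
  have hXR : insert v (reachSet G Δ X) ⊆ reachSet G W X :=
    Set.insert_subset (reachSet_adj (hΔW hu) huv hvW) hΔW
  have hX : X ⊆ insert v (reachSet G Δ X) :=
    (subset_reachSet_of_mem_separators h.mem).trans (Set.subset_insert _ _)
  exact ⟨(isImportantSeparator_congr_source hX hXR).2 hW.1, hW.2.1,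
    Set.disjoint_right.2 fun _ hx => notMem_of_mem_reachSet (hXR hx)⟩

/-- Induction on `μ ≥ 2p - λ`, `λ` the minimum separator size, branching on a vertex `v` of the
furthest minimum separator: if `v ∈ W`, delete `v` and `p` drops; otherwise move the source up to
`v`, and `λ` rises. -/
theorem ncard_importantSeparators_le_two_pow [Finite V] (μ : ℕ) :
    ∀ (G : SimpleGraph V) (X S : Set V) (p : ℕ),
      (∀ W ∈ separators G X S, 2 * p ≤ μ + W.ncard) →
      (importantSeparators G X S p).ncard ≤ 2 ^ μ := by
  induction μ with
  | zero =>
    intro G X S p hμ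
    refine (Set.ncard_le_ncard (t := {∅}) fun W hW => ?_).trans (Set.ncard_singleton _).le
    have := hμ W (importantSeparators_subset_separators hW)
    have := hW.2.1
    exact Set.mem_singleton_iff.2 ((Set.ncard_eq_zero (Set.toFinite W)).1 (by omega))
  | succ μ ih =>
    intro G X S p hμ
    rcases (separators G X S).eq_empty_or_nonempty with hempty | hne
    · simp [Set.subset_empty_iff.1 (hempty ▸ importantSeparators_subset_separators)]
    obtain ⟨Δ, hΔ⟩ := exists_isFurthestMinSeparator hne
    rcases Δ.eq_empty_or_nonempty with rfl | ⟨v, hv⟩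
    · refine (Set.ncard_le_ncard (t := {∅}) fun W hW => ?_).trans ?_
      · exact (hW.1.2.1 ∅ (Set.empty_subset W) hΔ.mem.1).symm
      · simp [Nat.one_le_two_pow]
    have hvX : v ∉ X := hΔ.mem.2.notMem_of_mem_left hv
    have hmem := ncard_importantSeparators_mem_le (G := G) (S := S) (p := p) hvX
    have hnot := hΔ.ncard_importantSeparators_notMem_le (p := p) hv
    have hdel := ih (G.deleteIncidenceSet v) X S (p - 1) fun W hW => by
      have := hμ _ (insert_mem_separators_of_deleteIncidenceSet hvX hW)
      have := Set.ncard_insert_le v W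
      omega
    have hins := ih G (insert v (reachSet G Δ X)) S p fun W hW => by
      have := hΔ.ncard_lt hv hW
      have := hμ Δ hΔ.mem
      omega
    calc (importantSeparators G X S p).ncard
        ≤ {W ∈ importantSeparators G X S p | v ∈ W}.ncard +
            {W ∈ importantSeparators G X S p | v ∉ W}.ncard := by
          rw [← Set.ncard_union_eq (Set.disjoint_left.2 fun W h₁ h₂ => h₂.2 h₁.2)]
          exact Set.ncard_le_ncard fun W hW => by by_cases hvW : v ∈ W <;> simp [hW, hvW]
      _ ≤ 2 ^ (μ + 1) := by rw [pow_succ]; omega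

theorem ncard_importantSeparators_le [Finite V] (G : SimpleGraph V) (X S : Set V) (p : ℕ) :
    (importantSeparators G X S p).ncard ≤ 4 ^ p := by
  rw [show 4 ^ p = 2 ^ (2 * p) by rw [pow_mul]; norm_num]
  exact ncard_importantSeparators_le_two_pow _ G X S p fun _ _ => Nat.le_add_right _ _

end Counting

section Chips

variable {G : SimpleGraph V} {k : ℕ} {S C D X W₀ : Set V} {t : V}

lemma IsChip.disjoint (h : IsChip G k S C) : Disjoint C S :=
  Set.disjoint_left.2 fun s hsC hsS => by
    have hsN : s ∉ setNbhd G C := fun hN => hN.1 hsC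
    exact h.2.2.1 s ⟨hsC, hsN⟩ s ⟨hsS, hsN⟩ (.refl hsN)

lemma IsChip.subset_reachSet (h : IsChip G k S C) (ht : t ∈ C) :
    C ⊆ reachSet G (setNbhd G C) {t} :=
  subset_reachSet_of_preconnected h.1.preconnected ht
    (Set.disjoint_left.2 fun _ hc hN => hN.1 hc)

lemma IsChip.reachSet_singleton (h : IsChip G k S C) (ht : t ∈ C) :
    reachSet G (setNbhd G C) {t} = C :=
  (reachSet_subset_of_setNbhd_subset subset_rfl fun _ hx =>
    Set.mem_singleton_iff.1 hx.1 ▸ ht).antisymm (h.subset_reachSet ht)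

lemma IsChip.isImportantSeparator_singleton (h : IsChip G k S C) (ht : t ∈ C) :
    IsImportantSeparator G {t} S (setNbhd G C) :=
  (isImportantSeparator_congr_source (Set.singleton_subset_iff.2 ht) (h.subset_reachSet ht)).1
    h.2.2

variable [Finite V]

lemma isImportantSeparator_setNbhd_reachSet (hW₀ : W₀ ∈ separators G X S)
    (hmax : ∀ W ∈ separators G X S, W.ncard ≤ (setNbhd G (reachSet G W₀ X)).ncard →
      ¬ reachSet G W₀ X ⊂ reachSet G W X) :
    IsImportantSeparator G X S (setNbhd G (reachSet G W₀ X)) := by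
  set R := reachSet G W₀ X
  have hXR : X ⊆ R := subset_reachSet_of_mem_separators hW₀
  have hN : setNbhd G R ∈ separators G X S :=
    setNbhd_mem_separators hXR (disjoint_reachSet_of_mem_separators hW₀)
  have hNR : reachSet G (setNbhd G R) X = R := reachSet_setNbhd_reachSet hW₀.2.symm
  refine ⟨hN.1, fun W hWN hW => ?_, fun W hW hWcard hss => ?_⟩
  · by_contra hne
    obtain ⟨w, ⟨hwR, r, hr, hrw⟩, hwW⟩ := Set.exists_of_ssubset (hWN.ssubset_of_ne hne)
    have hRW : R ⊆ reachSet G W X := hNR ▸ reachSet_anti hWN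
    refine hmax W ⟨hW, hN.2.mono_left hWN⟩ (Set.ncard_le_ncard hWN)
      (Set.ssubset_iff_subset_ne.2 ⟨hRW, fun heq => hwR ?_⟩)
    exact heq ▸ reachSet_adj (hRW hr) hrw hwW
  · rw [hNR] at hss
    exact hmax W ⟨hW, Set.disjoint_right.2 fun _ hx =>
      notMem_of_mem_reachSet (hss.subset (hXR hx))⟩ hWcard hss

lemma exists_isChip_superset (hD : (G.induce D).Connected) (hDS : Disjoint D S)
    (hND : (setNbhd G D).ncard ≤ 3 * k) : ∃ C, IsChip G k S C ∧ D ⊆ C := by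
  have hN : setNbhd G D ∈ separators G D S := setNbhd_mem_separators subset_rfl hDS
  obtain ⟨W₀, ⟨hW₀, hW₀card⟩, hmax⟩ :=
    Set.exists_max_image {W ∈ separators G D S | W.ncard ≤ 3 * k}
      (fun W => (reachSet G W D).ncard) (Set.toFinite _) ⟨_, hN, hND⟩
  have hNcard : (setNbhd G (reachSet G W₀ D)).ncard ≤ 3 * k :=
    (Set.ncard_le_ncard setNbhd_reachSet_subset).trans hW₀card
  have himp := isImportantSeparator_setNbhd_reachSet hW₀ fun W hW hWcard hss =>
    (Set.ncard_lt_ncard hss).not_ge (hmax W ⟨hW, hWcard.trans hNcard⟩)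
  have hDR : D ⊆ reachSet G W₀ D := subset_reachSet_of_mem_separators hW₀
  refine ⟨reachSet G W₀ D, ⟨connected_induce_reachSet hD hW₀.2.symm, hNcard, ?_⟩, hDR⟩
  exact (isImportantSeparator_congr_source hDR
    (reachSet_setNbhd_reachSet hW₀.2.symm).superset).2 himp

lemma exists_mem_maximalChips_superset (h : IsChip G k S C) :
    ∃ C' ∈ maximalChips G k S, C ⊆ C' := by
  obtain ⟨C', hCC', hmax⟩ := Finite.exists_le_maximal (p := IsChip G k S) h
  refine ⟨C', ⟨hmax.prop, fun C'' hC'' hC'C'' => ?_⟩, hCC'⟩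
  exact (hmax.le_of_ge hC'' hC'C'').antisymm hC'C''

lemma ncard_maximalChips_mem_le (t : V) :
    {C ∈ maximalChips G k S | t ∈ C}.ncard ≤ 4 ^ (3 * k) := by
  refine (Set.ncard_le_ncard_of_injOn (setNbhd G) ?_ ?_).trans
    (ncard_importantSeparators_le G {t} S (3 * k))
  · rintro C ⟨hC, ht⟩
    exact ⟨hC.1.isImportantSeparator_singleton ht, hC.1.2.1,
      Set.disjoint_singleton_right.2 fun hN => hN.1 ht⟩
  rintro C₁ ⟨hC₁, ht₁⟩ C₂ ⟨hC₂, ht₂⟩ heq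
  rw [← hC₁.1.reachSet_singleton ht₁, ← hC₂.1.reachSet_singleton ht₂, heq]

end Chips

lemma ncard_biUnion_le_mul {ι α : Type*} {t : Set ι} (ht : t.Finite) {s : ι → Set α} {m : ℕ}
    (h : ∀ i ∈ t, (s i).ncard ≤ m) : (⋃ i ∈ t, s i).ncard ≤ t.ncard * m :=
  calc (⋃ i ∈ t, s i).ncard = (⋃ i ∈ ht.toFinset, s i).ncard := by simp
    _ ≤ ∑ i ∈ ht.toFinset, (s i).ncard := ht.toFinset.set_ncard_biUnion_le s
    _ ≤ ht.toFinset.card • m := Finset.sum_le_card_nsmul _ _ _ (by simpa using h)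
    _ = t.ncard * m := by rw [smul_eq_mul, Set.ncard_eq_toFinset_card t ht]

lemma setNbhd_sdiff_subset_inter {G : SimpleGraph V} {A B : Set V} (hU : A ∪ B = Set.univ)
    (hAB : ∀ a ∈ A \ B, ∀ b ∈ B \ A, ¬ G.Adj a b) : setNbhd G (B \ A) ⊆ A ∩ B := by
  rintro u ⟨hu, b, hb, hbu⟩
  have huAB : u ∈ A ∪ B := hU ▸ Set.mem_univ u
  by_contra h
  refine hAB u ?_ b hb hbu.symm
  simp only [Set.mem_sdiff, Set.mem_inter_iff, Set.mem_union] at hu huAB h ⊢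
  tauto

section Bound

variable [Finite V] {G : SimpleGraph V} {k : ℕ} {S Y Z : Set V} {v : V}

/-- `reachSet G (Y ∖ S)ᶜ {v}` is the component of `v` in `G[Y ∖ S]`; its neighbours lie in
`Z ∪ (Y ∩ S)`. -/
lemma exists_maximalChips_superset_component (hYZ : setNbhd G Y ⊆ Z) (hZ : Z.ncard ≤ k)
    (hYS : (Y ∩ S).ncard ≤ 2 * k) (hv : v ∈ Y \ S) :
    ∃ C ∈ maximalChips G k S, reachSet G (Y \ S)ᶜ {v} ⊆ C := by
  set D := reachSet G (Y \ S)ᶜ {v}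
  have hDP : D ⊆ Y \ S := fun _ hx => not_not.1 (notMem_of_mem_reachSet hx)
  have hND : setNbhd G D ⊆ Z ∪ (Y ∩ S) := by
    rintro u ⟨huD, z, hz, hzu⟩
    by_cases huY : u ∈ Y
    · exact .inr ⟨huY, by_contra fun huS => huD (reachSet_adj hz hzu (not_not.2 ⟨huY, huS⟩))⟩
    · exact .inl (hYZ ⟨huY, z, (hDP hz).1, hzu⟩)
  have hD : (G.induce D).Connected := connected_induce_reachSet
    (by rw [induce_singleton_eq_top]; exact connected_top)
    (Set.disjoint_singleton_left.2 (not_not.2 hv))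
  obtain ⟨C, hC, hDC⟩ := exists_isChip_superset (k := k) hD
    (Set.disjoint_left.2 fun _ hx hxS => (hDP hx).2 hxS)
    ((Set.ncard_le_ncard hND).trans ((Set.ncard_union_le _ _).trans (by omega)))
  obtain ⟨C', hC', hCC'⟩ := exists_mem_maximalChips_superset hC
  exact ⟨C', hC', hDC.trans hCC'⟩

/-- A maximal chip inside `Y ∖ S` next to `v` would lie in the maximal chip containing the
component of `v`. -/
lemma exists_maximalChips_inter_nonempty (hYZ : setNbhd G Y ⊆ Z) (hZ : Z.ncard ≤ k)
    (hYS : (Y ∩ S).ncard ≤ 2 * k) (hv : v ∈ Y ∩ chipBag G k S) (hvS : v ∉ S) :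
    ∃ C ∈ maximalChips G k S, (C ∩ Z).Nonempty ∧ v ∈ setNbhd G C := by
  have hvP : v ∈ Y \ S := ⟨hv.1, hvS⟩
  obtain ⟨Cv, hCv, hDCv⟩ := exists_maximalChips_superset_component hYZ hZ hYS hvP
  set D := reachSet G (Y \ S)ᶜ {v}
  have hvD : v ∈ D := mem_reachSet_of_mem rfl (not_not.2 hvP)
  rcases hv.2 with hcap | hcup
  · exact absurd (Or.inl (hDCv hvD)) (Set.mem_iInter₂.1 hcap Cv hCv)
  obtain ⟨C, hC, hvN⟩ := Set.mem_iUnion₂.1 hcup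
  refine ⟨C, hC, Set.not_disjoint_iff_nonempty_inter.1 fun hCZ => ?_, hvN⟩
  obtain ⟨hvC, u, hu, huv⟩ := hvN
  have huY : u ∈ Y :=
    by_contra fun huY => hCZ.notMem_of_mem_left hu (hYZ ⟨huY, v, hv.1, huv.symm⟩)
  have hCY : C ⊆ Y := (subset_reachSet_of_preconnected hC.1.1.preconnected hu hCZ).trans
    (reachSet_subset_of_setNbhd_subset hYZ fun _ hx => Set.mem_singleton_iff.1 hx.1 ▸ huY)
  have hCP : C ⊆ Y \ S := fun _ hx => ⟨hCY hx, hC.1.disjoint.notMem_of_mem_left hx⟩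
  have huD : u ∈ D := reachSet_adj hvD huv.symm (not_not.2 (hCP hu))
  have hCD : C ⊆ D := (subset_reachSet_of_preconnected hC.1.1.preconnected hu
    (Set.disjoint_compl_right_iff_subset.2 hCP)).trans
    (reachSet_subset_of_subset_reachSet (Set.singleton_subset_iff.2 huD))
  exact hvC (hC.2 Cv hCv.1 (hCD.trans hDCv) ▸ hDCv hvD)

lemma ncard_inter_chipBag_le (hYZ : setNbhd G Y ⊆ Z) (hZ : Z.ncard ≤ k)
    (hYS : (Y ∩ S).ncard ≤ 2 * k) :
    (Y ∩ chipBag G k S).ncard ≤ (3 * k) ^ 2 * 8 ^ (3 * k) + 2 * k := by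
  have hsub : Y ∩ chipBag G k S ⊆
      (Y ∩ S) ∪ ⋃ t ∈ Z, ⋃ C ∈ {C ∈ maximalChips G k S | t ∈ C}, setNbhd G C := by
    intro v hv
    by_cases hvS : v ∈ S
    · exact .inl ⟨hv.1, hvS⟩
    obtain ⟨C, hC, ⟨t, htC, htZ⟩, hvN⟩ := exists_maximalChips_inter_nonempty hYZ hZ hYS hv hvS
    exact .inr (Set.mem_biUnion htZ (Set.mem_biUnion ⟨hC, htC⟩ hvN))
  have hunion : (⋃ t ∈ Z, ⋃ C ∈ {C ∈ maximalChips G k S | t ∈ C}, setNbhd G C).ncard ≤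
      k * (4 ^ (3 * k) * (3 * k)) :=
    (ncard_biUnion_le_mul (Set.toFinite Z) fun t _ =>
      (ncard_biUnion_le_mul (Set.toFinite _) fun C hC => hC.1.1.2.1).trans
        (Nat.mul_le_mul_right _ (ncard_maximalChips_mem_le t))).trans
      (Nat.mul_le_mul_right _ hZ)
  have harith : k * (4 ^ (3 * k) * (3 * k)) ≤ (3 * k) ^ 2 * 8 ^ (3 * k) := by
    rw [show k * (4 ^ (3 * k) * (3 * k)) = (k * (3 * k)) * 4 ^ (3 * k) by ring]
    gcongr
    · nlinarith
    · norm_num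
  calc (Y ∩ chipBag G k S).ncard ≤ (Y ∩ S).ncard + k * (4 ^ (3 * k) * (3 * k)) :=
        (Set.ncard_le_ncard hsub).trans ((Set.ncard_union_le _ _).trans (by omega))
    _ ≤ (3 * k) ^ 2 * 8 ^ (3 * k) + 2 * k := by omega

end Bound

theorem chipBag_unbreakable_general {V : Type*} [Fintype V]
    (G : SimpleGraph V) (k : ℕ) (S : Set V)
    (hS : Unbreakable G S (2 * k) k) :
    Unbreakable G (chipBag G k S) ((3 * k) ^ 2 * 8 ^ (3 * k) + 2 * k) k := by
  intro A B hU hAB hord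
  rcases hS A B hU hAB hord with hA | hB
  · refine .inl (ncard_inter_chipBag_le (setNbhd_sdiff_subset_inter (B := A) ?_ ?_) ?_ hA)
    · rwa [Set.union_comm]
    · exact fun b hb a ha hba => hAB a ha b hb hba.symm
    · rwa [Set.inter_comm]
  · exact .inr (ncard_inter_chipBag_le (setNbhd_sdiff_subset_inter hU hAB) hord hB)

/-- the set `A` is `(τ,k)`-unbreakable (Lemma `A-unbreakable`). -/
theorem chipBag_unbreakable {V : Type*} [Fintype V] [DecidableEq V]
    (G : SimpleGraph V) (hG : G.Connected) (k : ℕ) (hk : 0 < k) (S : Set V)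
    (hS : Unbreakable G S (2 * k) k) :
    Unbreakable G (chipBag G k S) ((3 * k) ^ 2 * 8 ^ (3 * k) + 2 * k) k :=
  chipBag_unbreakable_general G k S hS
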